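/- arXiv:1402.4574 — 3 statements merged into one kernel-verified Lean document; each statement's English description precedes it below -/
import Mathlib

section
/- Suppose λ: ℝ → ℝ satisfies λ(k) = E + C k^{2n−1} e^{−k²} (1 + r(k)) for large k, where C > 0, n ≥ 1, and r(k) = O(k^{−2}) as k → +∞, and λ is continuous, strictly decreasing with limit E at +∞. Define k(δ) by λ(k(δ)) = E + δ for small δ > 0. Then k(δ)² = |log δ| + ((2n−1)/2) log |log δ| + log C + o(1) as δ → 0⁺. -/
/-!
Since `f` decreases strictly to `E`, `k δ → ∞` as `δ → 0⁺`. Taking logarithms in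
`δ = C k^(2n-1) e^(-k²) (1 + r k)` gives `k² = |log δ| + log C + ((2n-1)/2) log k² + o(1)`.
Hence `|log δ| / k² → 1`, so `log k² = log |log δ| + o(1)`, and substituting this back
yields the expansion.
-/

open Filter Real Topology

theorem StrictAnti.lt_of_tendsto_atTop {α β : Type*} [LinearOrder α] [NoMaxOrder α]
    [TopologicalSpace β] [Preorder β] [OrderClosedTopology β]
    {f : α → β} {b : β} (hf : StrictAnti f) (hb : Tendsto f atTop (𝓝 b)) (x : α) : b < f x := by
  obtain ⟨y, hxy⟩ := exists_gt x
  exact (hf.antitone.le_of_tendsto hb y).trans_lt (hf hxy)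

theorem StrictAnti.tendsto_atTop_of_tendsto_comp {ι α β : Type*} [LinearOrder α]
    [TopologicalSpace β] [LinearOrder β] [OrderClosedTopology β] {l : Filter ι}
    {f : α → β} {b : β} {k : ι → α} (hf : StrictAnti f) (hb : ∀ x, b < f x)
    (hk : Tendsto (f ∘ k) l (𝓝 b)) : Tendsto k l atTop :=
  tendsto_atTop.2 fun x ↦ (hk.eventually_lt_const (hb x)).mono fun _ h ↦ (hf.lt_iff_gt.1 h).le

theorem tendsto_log_sub_log_of_tendsto_div {ι : Type*} {l : Filter ι} {u v : ι → ℝ}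
    (huv : Tendsto (fun x ↦ u x / v x) l (𝓝 1)) (hv : ∀ᶠ x in l, v x ≠ 0) :
    Tendsto (fun x ↦ log (u x) - log (v x)) l (𝓝 0) := by
  have hlog : Tendsto (fun x ↦ log (u x / v x)) l (𝓝 0) := by
    simpa using huv.log one_ne_zero
  refine hlog.congr' ?_
  filter_upwards [hv, huv.eventually_const_lt one_pos] with x hvx hdiv
  exact log_div (fun hu ↦ by simp [hu] at hdiv) hvx

theorem tendsto_sub_add_mul_log_of_eventuallyEq {ι : Type*} {l : Filter ι} {g L ε : ι → ℝ}
    {a c : ℝ} (hg : Tendsto g l atTop) (hε : Tendsto ε l (𝓝 0))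
    (h : ∀ᶠ x in l, g x = L x + a + c * log (g x) + ε x) :
    Tendsto (fun x ↦ g x - (L x + c * log (L x) + a)) l (𝓝 0) := by
  have hg0 : ∀ᶠ x in l, g x ≠ 0 := hg.eventually_ne_atTop 0
  have hratio : Tendsto (fun x ↦ L x / g x) l (𝓝 1) := by
    have hlim : Tendsto (fun x ↦ 1 - a / g x - c * (log (g x) / g x) - ε x / g x) l
        (𝓝 (1 - 0 - c * 0 - 0)) :=
      ((tendsto_const_nhds.sub (tendsto_const_nhds.div_atTop hg)).sub
        ((isLittleO_log_id_atTop.tendsto_div_nhds_zero.comp hg).const_mul c)).sub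
        (hε.div_atTop hg)
    simp only [sub_zero, mul_zero] at hlim
    refine hlim.congr' ?_
    filter_upwards [h, hg0] with x hx hgx
    rw [eq_div_iff hgx]
    field_simp
    linear_combination hx
  have hgap := tendsto_log_sub_log_of_tendsto_div hratio hg0
  have hlim : Tendsto (fun x ↦ -c * (log (L x) - log (g x)) + ε x) l (𝓝 (-c * 0 + 0)) :=
    (hgap.const_mul _).add hε
  simp only [mul_zero, add_zero] at hlim
  refine hlim.congr' ?_
  filter_upwards [h] with x hx
  linear_combination -hx

theorem sq_eq_neg_log_add_of_eq_mul_pow_mul_exp {δ C y s : ℝ} {m : ℕ} (hC : 0 < C) (hy : 0 < y)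
    (hs : 0 < s) (hδ : δ = C * y ^ m * exp (-y ^ 2) * s) :
    y ^ 2 = -log δ + log C + m / 2 * log (y ^ 2) + log s := by
  rw [hδ, log_mul (by positivity) hs.ne', log_mul (by positivity) (exp_pos _).ne',
    log_mul hC.ne' (by positivity), log_exp, log_pow, log_pow]
  push_cast
  ring

theorem stmt4_general (f : ℝ → ℝ) (E C : ℝ) (hC : 0 < C) (n : ℕ) (hn : 1 ≤ n)
    (r : ℝ → ℝ) (hr : Asymptotics.IsBigO Filter.atTop r (fun k : ℝ => k⁻¹ ^ 2))
    (hform : ∀ᶠ k in Filter.atTop,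
      f k = E + C * k ^ (2 * n - 1) * Real.exp (-k ^ 2) * (1 + r k))
    (hanti : StrictAnti f)
    (htop : Filter.Tendsto f Filter.atTop (nhds E))
    (k : ℝ → ℝ) (hk : ∀ᶠ δ in nhdsWithin 0 (Set.Ioi 0), f (k δ) = E + δ) :
    Filter.Tendsto
      (fun δ => k δ ^ 2 -
        (|Real.log δ| + ((2 * (n : ℝ) - 1) / 2) * Real.log |Real.log δ| + Real.log C))
      (nhdsWithin 0 (Set.Ioi 0)) (nhds 0) := by
  have hfk : Tendsto (f ∘ k) (𝓝[>] 0) (𝓝 E) := by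
    refine Tendsto.congr' (EventuallyEq.symm hk) ?_
    simpa using (tendsto_id.const_add E).mono_left (nhdsWithin_le_nhds (a := (0 : ℝ)))
  have hk_top : Tendsto k (𝓝[>] 0) atTop :=
    hanti.tendsto_atTop_of_tendsto_comp (hanti.lt_of_tendsto_atTop htop) hfk
  have hrk : Tendsto (fun δ ↦ r (k δ)) (𝓝[>] 0) (𝓝 0) :=
    (hr.trans_tendsto (by simpa using (tendsto_inv_atTop_zero (𝕜 := ℝ)).pow 2)).comp hk_top
  have hlog_rk : Tendsto (fun δ ↦ log (1 + r (k δ))) (𝓝[>] 0) (𝓝 0) := by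
    simpa using (hrk.const_add 1).log (by simp)
  have hdeg : ((2 * n - 1 : ℕ) : ℝ) = 2 * n - 1 := by
    rw [Nat.cast_sub (by omega)]
    push_cast
    ring
  refine tendsto_sub_add_mul_log_of_eventuallyEq ((tendsto_pow_atTop two_ne_zero).comp hk_top)
    hlog_rk ?_
  filter_upwards [hk, hk_top.eventually hform, hk_top.eventually_gt_atTop 0,
    hrk.eventually_const_lt neg_one_lt_zero, Ioo_mem_nhdsGT one_pos] with δ hδ hfδ hkδ hrδ hδ01
  rw [abs_of_neg (log_neg hδ01.1 hδ01.2), ← hdeg]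
  exact sq_eq_neg_log_add_of_eq_mul_pow_mul_exp hC hkδ (by linarith) (by linarith)

/-- Asymptotic inversion of the band-function asymptotics:
`k(δ)² = |log δ| + ((2n-1)/2) log |log δ| + log C + o(1)` as `δ → 0⁺`. -/
theorem stmt4 (f : ℝ → ℝ) (E C : ℝ) (hC : 0 < C) (n : ℕ) (hn : 1 ≤ n)
    (r : ℝ → ℝ) (hr : Asymptotics.IsBigO Filter.atTop r (fun k : ℝ => k⁻¹ ^ 2))
    (hform : ∀ᶠ k in Filter.atTop,
      f k = E + C * k ^ (2 * n - 1) * Real.exp (-k ^ 2) * (1 + r k))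
    (hcont : Continuous f) (hanti : StrictAnti f)
    (htop : Filter.Tendsto f Filter.atTop (nhds E))
    (k : ℝ → ℝ) (hk : ∀ᶠ δ in nhdsWithin 0 (Set.Ioi 0), f (k δ) = E + δ) :
    Filter.Tendsto
      (fun δ => k δ ^ 2 -
        (|Real.log δ| + ((2 * (n : ℝ) - 1) / 2) * Real.log |Real.log δ| + Real.log C))
      (nhdsWithin 0 (Set.Ioi 0)) (nhds 0) :=
  stmt4_general f E C hC n hn r hr hform hanti htop k hk
end

section
/- Under the hypotheses of the previous statement, k(δ) = √|log δ| + ((2n−1)/4)·(log |log δ|)/√|log δ| + o((log |log δ|)/√|log δ|) as δ → 0⁺. -/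
/-!
Write `x = |log δ|`, `c = (2n-1)/4` and `g_a(x) = √x + a log x / √x`. Since
`g_a(x)² = x + 2a log x + o(1)` and `log g_a(x) = ½ log x + o(1)`, the gaussian tail of `f` gives
`log (f (g_a x) - E) - log δ = 2 (c - a) log x + log C + o(1)`, which tends to `+∞` for `a < c` and
to `-∞` for `a > c`. As `f` is strictly decreasing, `k δ` is therefore eventually squeezed between
`g_{c-ε}(x)` and `g_{c+ε}(x)` for every `ε > 0`.
-/

open Filter Real Topology

lemma tendsto_log_div_sqrt_atTop : Tendsto (fun x : ℝ => log x / √x) atTop (𝓝 0) := by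
  refine (isLittleO_log_rpow_atTop (by norm_num : (0 : ℝ) < 1 / 2)).tendsto_div_nhds_zero.congr' ?_
  filter_upwards [eventually_ge_atTop 0] with x hx
  rw [← sqrt_eq_rpow]

noncomputable def sqrtAddLogDivSqrt (a x : ℝ) : ℝ := √x + a * (log x / √x)

lemma sqrtAddLogDivSqrt_sq (a : ℝ) {x : ℝ} (hx : 0 < x) :
    sqrtAddLogDivSqrt a x ^ 2 = x + 2 * a * log x + (a * (log x / √x)) ^ 2 := by
  have hs : √x ≠ 0 := (sqrt_pos.2 hx).ne'
  unfold sqrtAddLogDivSqrt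
  field_simp
  rw [sq_sqrt hx.le]
  ring

lemma tendsto_sqrtAddLogDivSqrt_atTop (a : ℝ) : Tendsto (sqrtAddLogDivSqrt a) atTop atTop :=
  tendsto_sqrt_atTop.atTop_add (by simpa using tendsto_log_div_sqrt_atTop.const_mul a)

lemma tendsto_log_sqrtAddLogDivSqrt_sub_half_log (a : ℝ) :
    Tendsto (fun x => log (sqrtAddLogDivSqrt a x) - log x / 2) atTop (𝓝 0) := by
  have hratio : Tendsto (fun x => 1 + a * (log x / √x) * (√x)⁻¹) atTop (𝓝 1) := by
    simpa using ((tendsto_log_div_sqrt_atTop.const_mul a).mul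
      (tendsto_inv_atTop_zero.comp tendsto_sqrt_atTop)).const_add 1
  have hlog := (continuousAt_log one_ne_zero).tendsto.comp hratio
  rw [log_one] at hlog
  refine hlog.congr' ?_
  filter_upwards [eventually_gt_atTop 0, hratio.eventually (lt_mem_nhds one_pos)] with x hx hpos
  have hs : 0 < √x := sqrt_pos.2 hx
  have hfactor : sqrtAddLogDivSqrt a x = √x * (1 + a * (log x / √x) * (√x)⁻¹) := by
    unfold sqrtAddLogDivSqrt
    field_simp
  rw [Function.comp_apply, hfactor, log_mul hs.ne' hpos.ne', log_sqrt hx.le]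
  ring

lemma tendsto_comp_sqrtAddLogDivSqrt {φ : ℝ → ℝ} {m b : ℝ}
    (hφ : Tendsto (fun k => φ k + k ^ 2 - m * log k) atTop (𝓝 b)) (a : ℝ) :
    Tendsto (fun x => φ (sqrtAddLogDivSqrt a x) + x - (m / 2 - 2 * a) * log x) atTop (𝓝 b) := by
  have hsum := ((hφ.comp (tendsto_sqrtAddLogDivSqrt_atTop a)).add
    ((tendsto_log_sqrtAddLogDivSqrt_sub_half_log a).const_mul m)).sub
    ((tendsto_log_div_sqrt_atTop.const_mul a).pow 2)
  simp only [mul_zero, add_zero, zero_pow two_ne_zero, sub_zero] at hsum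
  refine hsum.congr' ?_
  filter_upwards [eventually_gt_atTop 0] with x hx
  simp only [Function.comp_apply]
  rw [sqrtAddLogDivSqrt_sq a hx]
  ring

lemma tendsto_comp_sqrtAddLogDivSqrt_atTop {φ : ℝ → ℝ} {m b : ℝ}
    (hφ : Tendsto (fun k => φ k + k ^ 2 - m * log k) atTop (𝓝 b)) {a : ℝ} (ha : a < m / 4) :
    Tendsto (fun x => φ (sqrtAddLogDivSqrt a x) + x) atTop atTop := by
  refine ((tendsto_log_atTop.const_mul_atTop (by linarith : 0 < m / 2 - 2 * a)).atTop_add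
    (tendsto_comp_sqrtAddLogDivSqrt hφ a)).congr fun x => ?_
  ring

lemma tendsto_comp_sqrtAddLogDivSqrt_atBot {φ : ℝ → ℝ} {m b : ℝ}
    (hφ : Tendsto (fun k => φ k + k ^ 2 - m * log k) atTop (𝓝 b)) {a : ℝ} (ha : m / 4 < a) :
    Tendsto (fun x => φ (sqrtAddLogDivSqrt a x) + x) atTop atBot := by
  refine ((tendsto_log_atTop.const_mul_atTop_of_neg (by linarith : m / 2 - 2 * a < 0)).atBot_add
    (tendsto_comp_sqrtAddLogDivSqrt hφ a)).congr fun x => ?_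
  ring

lemma eventually_lt_of_eventually_eq_gaussian_tail {f r : ℝ → ℝ} {E C : ℝ} {m : ℕ} (hC : 0 < C)
    (hf : ∀ᶠ k in atTop, f k = E + C * k ^ m * exp (-k ^ 2) * (1 + r k))
    (hr : Tendsto r atTop (𝓝 0)) : ∀ᶠ k in atTop, E < f k := by
  filter_upwards [hf, eventually_gt_atTop 0, hr.eventually (lt_mem_nhds neg_one_lt_zero)]
    with k hfk hk hrk
  have : 0 < 1 + r k := by linarith
  rw [hfk, lt_add_iff_pos_right]
  positivity

lemma tendsto_log_sub_add_sq_sub_mul_log {f r : ℝ → ℝ} {E C : ℝ} {m : ℕ} (hC : 0 < C)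
    (hf : ∀ᶠ k in atTop, f k = E + C * k ^ m * exp (-k ^ 2) * (1 + r k))
    (hr : Tendsto r atTop (𝓝 0)) :
    Tendsto (fun k => log (f k - E) + k ^ 2 - m * log k) atTop (𝓝 (log C)) := by
  have hr1 : Tendsto (fun k => 1 + r k) atTop (𝓝 1) := by simpa using hr.const_add 1
  have hlog := ((continuousAt_log one_ne_zero).tendsto.comp hr1).const_add (log C)
  simp only [add_zero, log_one] at hlog
  refine hlog.congr' ?_
  filter_upwards [hf, eventually_gt_atTop 0, hr.eventually (lt_mem_nhds neg_one_lt_zero)]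
    with k hfk hk hrk
  have : 0 < 1 + r k := by linarith
  rw [hfk, add_sub_cancel_left, log_mul (by positivity) this.ne', log_mul (by positivity) (exp_pos _).ne',
    log_mul hC.ne' (by positivity), log_pow, log_exp, Function.comp_apply]
  ring

lemma StrictAnti.eventually_lt_of_tendsto_atBot {f k g : ℝ → ℝ} {E : ℝ} (hf : StrictAnti f)
    (hk : ∀ᶠ δ in 𝓝[>] 0, f (k δ) = E + δ)
    (hg : Tendsto (fun δ => log (f (g δ) - E) + |log δ|) (𝓝[>] 0) atBot) :
    ∀ᶠ δ in 𝓝[>] 0, k δ < g δ := by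
  filter_upwards [hk, hg.eventually_lt_atBot 0, Ioo_mem_nhdsGT one_pos] with δ hkδ hgδ ⟨hδ0, hδ1⟩
  rw [abs_of_neg (log_neg hδ0 hδ1)] at hgδ
  have : f (g δ) - E < δ := by
    rcases le_or_gt (f (g δ) - E) 0 with h | h
    · linarith
    · exact (log_lt_log_iff h hδ0).1 (by linarith)
  exact hf.lt_iff_gt.1 (by linarith)

lemma StrictAnti.eventually_gt_of_tendsto_atTop {f k g : ℝ → ℝ} {E : ℝ} (hf : StrictAnti f)
    (hk : ∀ᶠ δ in 𝓝[>] 0, f (k δ) = E + δ) (hpos : ∀ᶠ δ in 𝓝[>] 0, E < f (g δ))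
    (hg : Tendsto (fun δ => log (f (g δ) - E) + |log δ|) (𝓝[>] 0) atTop) :
    ∀ᶠ δ in 𝓝[>] 0, g δ < k δ := by
  filter_upwards [hk, hpos, hg.eventually_gt_atTop 0, Ioo_mem_nhdsGT one_pos]
    with δ hkδ hpδ hgδ ⟨hδ0, hδ1⟩
  rw [abs_of_neg (log_neg hδ0 hδ1)] at hgδ
  have : δ < f (g δ) - E := (log_lt_log_iff hδ0 (by linarith)).1 (by linarith)
  exact hf.lt_iff_gt.1 (by linarith)

lemma tendsto_sub_div_nhds_zero_of_forall_eventually {α : Type*} {l : Filter α} {k S u : α → ℝ}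
    {c : ℝ} (hu : ∀ᶠ x in l, 0 < u x)
    (h : ∀ ε > 0, ∀ᶠ x in l, S x + (c - ε) * u x < k x ∧ k x < S x + (c + ε) * u x) :
    Tendsto (fun x => (k x - (S x + c * u x)) / u x) l (𝓝 0) := by
  rw [Metric.tendsto_nhds]
  intro ε hε
  filter_upwards [hu, h ε hε] with x hux ⟨hlo, hhi⟩
  rw [Real.dist_eq, sub_zero, abs_lt, lt_div_iff₀ hux, div_lt_iff₀ hux]
  constructor <;> linarith

theorem stmt5_general (f : ℝ → ℝ) (E C : ℝ) (hC : 0 < C) (n : ℕ) (hn : 1 ≤ n)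
    (r : ℝ → ℝ) (hr : Asymptotics.IsBigO Filter.atTop r (fun k : ℝ => k⁻¹ ^ 2))
    (hform : ∀ᶠ k in Filter.atTop,
      f k = E + C * k ^ (2 * n - 1) * Real.exp (-k ^ 2) * (1 + r k))
    (hanti : StrictAnti f)
    (k : ℝ → ℝ) (hk : ∀ᶠ δ in nhdsWithin 0 (Set.Ioi 0), f (k δ) = E + δ) :
    Filter.Tendsto
      (fun δ =>
        (k δ - (Real.sqrt |Real.log δ| +
          ((2 * (n : ℝ) - 1) / 4) * Real.log |Real.log δ| / Real.sqrt |Real.log δ|)) /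
        (Real.log |Real.log δ| / Real.sqrt |Real.log δ|))
      (nhdsWithin 0 (Set.Ioi 0)) (nhds 0) := by
  have hr0 : Tendsto r atTop (𝓝 0) :=
    hr.trans_tendsto (by simpa using (tendsto_inv_atTop_zero (𝕜 := ℝ)).pow 2)
  have hm : ((2 * n - 1 : ℕ) : ℝ) = 2 * n - 1 := by
    push_cast [Nat.cast_sub (by omega : 1 ≤ 2 * n)]
    ring
  have hφ := tendsto_log_sub_add_sq_sub_mul_log hC hform hr0
  rw [hm] at hφ
  have hL : Tendsto (fun δ => |log δ|) (𝓝[>] 0) atTop :=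
    tendsto_abs_atBot_atTop.comp tendsto_log_nhdsGT_zero
  have hu : ∀ᶠ δ in 𝓝[>] (0 : ℝ), 0 < log |log δ| / √|log δ| :=
    (hL.eventually_gt_atTop 1).mono fun δ h => div_pos (log_pos h) (sqrt_pos.2 (by linarith))
  simp only [mul_div_assoc]
  refine tendsto_sub_div_nhds_zero_of_forall_eventually hu fun ε hε => ?_
  have hgpos := ((tendsto_sqrtAddLogDivSqrt_atTop ((2 * n - 1) / 4 - ε)).comp hL).eventually
    (eventually_lt_of_eventually_eq_gaussian_tail hC hform hr0)
  have lower := hanti.eventually_gt_of_tendsto_atTop hk hgpos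
    ((tendsto_comp_sqrtAddLogDivSqrt_atTop hφ (a := (2 * n - 1) / 4 - ε) (by linarith)).comp hL)
  have upper := hanti.eventually_lt_of_tendsto_atBot hk
    ((tendsto_comp_sqrtAddLogDivSqrt_atBot hφ (a := (2 * n - 1) / 4 + ε) (by linarith)).comp hL)
  exact lower.and upper

/-- `k(δ) = √|log δ| + ((2n-1)/4) (log |log δ|)/√|log δ| + o((log |log δ|)/√|log δ|)`
as `δ → 0⁺`, for the inverse band function `k(δ)` defined by `f (k δ) = E + δ`. -/
theorem stmt5 (f : ℝ → ℝ) (E C : ℝ) (hC : 0 < C) (n : ℕ) (hn : 1 ≤ n)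
    (r : ℝ → ℝ) (hr : Asymptotics.IsBigO Filter.atTop r (fun k : ℝ => k⁻¹ ^ 2))
    (hform : ∀ᶠ k in Filter.atTop,
      f k = E + C * k ^ (2 * n - 1) * Real.exp (-k ^ 2) * (1 + r k))
    (hcont : Continuous f) (hanti : StrictAnti f)
    (htop : Filter.Tendsto f Filter.atTop (nhds E))
    (k : ℝ → ℝ) (hk : ∀ᶠ δ in nhdsWithin 0 (Set.Ioi 0), f (k δ) = E + δ) :
    Filter.Tendsto
      (fun δ =>
        (k δ - (Real.sqrt |Real.log δ| +
          ((2 * (n : ℝ) - 1) / 4) * Real.log |Real.log δ| / Real.sqrt |Real.log δ|)) /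
        (Real.log |Real.log δ| / Real.sqrt |Real.log δ|))
      (nhdsWithin 0 (Set.Ioi 0)) (nhds 0) :=
  stmt5_general f E C hC n hn r hr hform hanti k hk
end

section
/- Let u: ℝ₊ → ℝ solve −u'' + (x − k)² u = λ u on (0, ∞) with u(0) = 0, where λ depends smoothly on k and u depends smoothly on k with ‖u(·,k)‖_{L²(ℝ₊)} = 1 for all k. Then the Hadamard formula holds: dλ/dk = −(∂_x u(0, k))². -/
open MeasureTheory Filter Set

noncomputable def pd (f : ℝ × ℝ → ℝ) (w : ℝ × ℝ) : ℝ × ℝ → ℝ := fun p => fderiv ℝ f p w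

lemma contDiff_pd {f : ℝ × ℝ → ℝ} (hf : ContDiff ℝ (⊤ : ℕ∞) f) (w : ℝ × ℝ) :
    ContDiff ℝ (⊤ : ℕ∞) (pd f w) :=
  (ContinuousLinearMap.apply ℝ ℝ w).contDiff.comp (hf.fderiv_right (by simp))

lemma hasDerivAt_slice_x {f : ℝ × ℝ → ℝ} (hf : ContDiff ℝ (⊤ : ℕ∞) f) (k x : ℝ) :
    HasDerivAt (fun t => f (k, t)) (pd f (0,1) (k,x)) x := by
  have h1 : HasDerivAt (fun t : ℝ => ((k, t) : ℝ × ℝ)) (0,1) x :=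
    (hasDerivAt_const x k).prodMk (hasDerivAt_id x)
  exact ((hf.differentiable (by simp) (k,x)).hasFDerivAt.comp_hasDerivAt x h1)

lemma hasDerivAt_slice_k {f : ℝ × ℝ → ℝ} (hf : ContDiff ℝ (⊤ : ℕ∞) f) (k x : ℝ) :
    HasDerivAt (fun t => f (t, x)) (pd f (1,0) (k,x)) k := by
  have h1 : HasDerivAt (fun t : ℝ => ((t, x) : ℝ × ℝ)) (1,0) k :=
    (hasDerivAt_id k).prodMk (hasDerivAt_const k x)
  exact ((hf.differentiable (by simp) (k,x)).hasFDerivAt.comp_hasDerivAt k h1)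

lemma pd_comm {f : ℝ × ℝ → ℝ} (hf : ContDiff ℝ (⊤ : ℕ∞) f) (v w p : ℝ × ℝ) :
    pd (pd f w) v p = pd (pd f v) w p := by
  have hdf : Differentiable ℝ (fderiv ℝ f) :=
    (hf.fderiv_right (m := (⊤ : ℕ∞)) (by simp)).differentiable (by simp)
  have key : ∀ a b : ℝ × ℝ, pd (pd f b) a p = fderiv ℝ (fderiv ℝ f) p a b := by
    intro a b
    have : pd f b = fun q => fderiv ℝ f q b := rfl
    rw [pd, this]
    have h := fderiv_clm_apply (hdf p) (differentiableAt_const b)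
    simp only [fderiv_fun_const, Pi.zero_apply, ContinuousLinearMap.comp_zero, add_zero] at h
    rw [h]
    simp
  rw [key, key]
  exact second_derivative_symmetric (fun y => (hf.differentiable (by simp) y).hasFDerivAt)
    (hdf p).hasFDerivAt v w

lemma slice_x_eq {f : ℝ × ℝ → ℝ} (hf : ContDiff ℝ (⊤ : ℕ∞) f) (k : ℝ) :
    deriv (fun x' => f (k, x')) = fun x' => pd f (0,1) (k, x') :=
  funext fun x' => (hasDerivAt_slice_x hf k x').deriv

lemma slice_k_eq {f : ℝ × ℝ → ℝ} (hf : ContDiff ℝ (⊤ : ℕ∞) f) (k : ℝ) :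
    (fun x' => deriv (fun k' => f (k', x')) k) = fun x' => pd f (1,0) (k, x') :=
  funext fun x' => (hasDerivAt_slice_k hf k x').deriv

lemma deriv_comm {f : ℝ × ℝ → ℝ} (hf : ContDiff ℝ (⊤ : ℕ∞) f) (k x : ℝ) :
    deriv (fun k' => deriv (fun x' => f (k', x')) x) k
      = deriv (fun x' => deriv (fun k' => f (k', x')) k) x := by
  have e1 : (fun k' => deriv (fun x' => f (k', x')) x) = fun k' => pd f (0,1) (k', x) :=
    funext fun k' => by rw [slice_x_eq hf k']
  rw [e1, slice_k_eq hf k, (hasDerivAt_slice_k (contDiff_pd hf (0,1)) k x).deriv,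
    (hasDerivAt_slice_x (contDiff_pd hf (1,0)) k x).deriv, pd_comm hf]

lemma third_mixed {f : ℝ × ℝ → ℝ} (hf : ContDiff ℝ (⊤ : ℕ∞) f) (k x : ℝ) :
    deriv (fun k' => deriv (deriv (fun x' => f (k', x'))) x) k
      = deriv (deriv (fun x' => deriv (fun k' => f (k', x')) k)) x := by
  have hg := contDiff_pd hf (0,1)
  have e1 : (fun k' => deriv (deriv (fun x' => f (k', x'))) x)
      = fun k' => deriv (fun x' => pd f (0,1) (k', x')) x :=
    funext fun k' => by rw [slice_x_eq hf k']
  rw [e1, deriv_comm hg k x, slice_k_eq hf k, slice_k_eq hg k]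
  congr 1
  funext x'
  rw [pd_comm hf, ← (hasDerivAt_slice_x (contDiff_pd hf (1,0)) k x').deriv]

/-- Hadamard formula: if `u(·,k)` is a smooth family of real `L²(ℝ₊)`-normalized solutions of
`-u'' + (x-k)² u = λ(k) u` on `(0,∞)` with `u(0,k) = 0` and suitable decay at infinity, then
`λ'(k) = -(∂ₓu(0,k))²`. -/
theorem stmt8 (u : ℝ → ℝ → ℝ) (lam : ℝ → ℝ)
    (hsmooth : ContDiff ℝ (⊤ : ℕ∞) (fun p : ℝ × ℝ => u p.1 p.2))
    (hlam : ContDiff ℝ (⊤ : ℕ∞) lam)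
    (heq : ∀ k : ℝ, ∀ x ∈ Set.Ioi (0 : ℝ),
      -(deriv (deriv (u k)) x) + (x - k) ^ 2 * u k x = lam k * u k x)
    (hbc : ∀ k : ℝ, u k 0 = 0)
    (hnorm : ∀ k : ℝ, ∫ x in Set.Ioi (0 : ℝ), (u k x) ^ 2 = 1)
    (hdecay : ∀ k : ℝ,
      Filter.Tendsto (fun x => u k x) Filter.atTop (nhds 0) ∧
      Filter.Tendsto (fun x => x * u k x) Filter.atTop (nhds 0) ∧
      Filter.Tendsto (fun x => deriv (u k) x) Filter.atTop (nhds 0) ∧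
      Filter.Tendsto (fun x => deriv (fun k' => u k' x) k) Filter.atTop (nhds 0)) :
    ∀ k : ℝ, deriv lam k = -(deriv (u k) 0) ^ 2 := by
  intro k
  obtain ⟨hu0, hxu0, hu'0, hv0⟩ := hdecay k
  set v : ℝ → ℝ := fun x => deriv (fun k' => u k' x) k with hv_def
  -- basic smoothness
  have hone : (1 : WithTop ℕ∞) ≤ ((⊤:ℕ∞) : WithTop ℕ∞) := by exact_mod_cast le_top
  have huk : ContDiff ℝ (⊤ : ℕ∞) (u k) := hsmooth.comp (contDiff_const.prodMk contDiff_id)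
  have hvc : ContDiff ℝ (⊤ : ℕ∞) v := by
    have e : v = fun x => pd (fun p : ℝ × ℝ => u p.1 p.2) (1,0) (k,x) := by
      rw [hv_def]; exact slice_k_eq hsmooth k
    rw [e]
    exact (contDiff_pd hsmooth (1,0)).comp (contDiff_const.prodMk contDiff_id)
  have hU' : ∀ x, HasDerivAt (fun k' => u k' x) (v x) k := by
    intro x
    exact (hasDerivAt_slice_k hsmooth k x).differentiableAt.hasDerivAt
  have hUd : ∀ x, HasDerivAt (u k) (deriv (u k) x) x :=
    fun x => (huk.differentiable (by simp) x).hasDerivAt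
  have hlamd : HasDerivAt lam (deriv lam k) k := (hlam.differentiable (by simp) k).hasDerivAt
  -- equation rearranged
  have hu2 : ∀ x ∈ Set.Ioi (0:ℝ), deriv (deriv (u k)) x
      = (x-k)^2 * u k x - lam k * u k x := by
    intro x hx; have := heq k x hx; linarith
  -- ODE for v
  have hveq : ∀ x ∈ Set.Ioi (0:ℝ), deriv (deriv v) x
      = (x-k)^2 * v x - lam k * v x - deriv lam k * u k x - 2*(x-k) * u k x := by
    intro x hx
    have hmix : deriv (fun k' => deriv (deriv (u k')) x) k = deriv (deriv v) x := by
      rw [hv_def]; exact third_mixed hsmooth k x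
    have hfun : (fun k' => deriv (deriv (u k')) x)
        = fun k' => (x - k')^2 * u k' x - lam k' * u k' x := by
      funext k'; have := heq k' x hx; linarith
    have h1 : HasDerivAt (fun k' : ℝ => (x - k')^2) ((2:ℕ) * (x-k)^1 * (-1)) k :=
      ((hasDerivAt_id k).const_sub x).pow 2
    have hR : HasDerivAt (fun k' => (x - k')^2 * u k' x - lam k' * u k' x)
        (((2:ℕ) * (x-k)^1 * (-1)) * u k x + (x-k)^2 * v x
          - (deriv lam k * u k x + lam k * v x)) k :=
      (h1.mul (hU' x)).sub (hlamd.mul (hU' x))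
    have h2 : deriv (fun k' => deriv (deriv (u k')) x) k
        = ((2:ℕ) * (x-k)^1 * (-1)) * u k x + (x-k)^2 * v x
          - (deriv lam k * u k x + lam k * v x) := by
      rw [hfun]; exact hR.deriv
    rw [← hmix, h2]; push_cast; ring
  -- third derivative of u k
  have hu3 : ∀ x ∈ Set.Ioi (0:ℝ), deriv (deriv (deriv (u k))) x
      = 2*(x-k)*u k x + ((x-k)^2 - lam k) * deriv (u k) x := by
    intro x hx
    have hev : deriv (deriv (u k)) =ᶠ[nhds x] fun y => (y-k)^2 * u k y - lam k * u k y := by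
      filter_upwards [Ioi_mem_nhds hx] with y hy using hu2 y hy
    rw [hev.deriv_eq]
    have ha : HasDerivAt (fun y : ℝ => (y-k)^2) ((2:ℕ) * (x-k)^1 * 1) x :=
      ((hasDerivAt_id x).sub_const k).pow 2
    have h1 : HasDerivAt (fun y => (y-k)^2 * u k y - lam k * u k y)
        (((2:ℕ) * (x-k)^1 * 1) * u k x + (x-k)^2 * deriv (u k) x
          - lam k * deriv (u k) x) x :=
      (ha.mul (hUd x)).sub ((hUd x).const_mul (lam k))
    rw [h1.deriv]; push_cast; ring
  -- w and its derivatives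
  set w : ℝ → ℝ := fun y => deriv (u k) y + v y with hw_def
  have hUc' : ContDiff ℝ (⊤ : ℕ∞) (u k) := huk.of_le (by simp)
  have hU1 : ContDiff ℝ (⊤ : ℕ∞) (deriv (u k)) := (contDiff_infty_iff_deriv.mp hUc').2
  have hU2c : ContDiff ℝ (⊤ : ℕ∞) (deriv (deriv (u k))) := (contDiff_infty_iff_deriv.mp hU1).2
  have hvc' : ContDiff ℝ (⊤ : ℕ∞) v := hvc.of_le (by simp)
  have hv1 : ContDiff ℝ (⊤ : ℕ∞) (deriv v) := (contDiff_infty_iff_deriv.mp hvc').2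
  have hwc : ContDiff ℝ (⊤ : ℕ∞) w := hU1.add hvc'
  have hwd : ∀ y, HasDerivAt w (deriv w y) y := fun y => (hwc.differentiable (by simp) y).hasDerivAt
  have hw1 : ∀ y, deriv w y = deriv (deriv (u k)) y + deriv v y := by
    intro y
    rw [hw_def]
    exact deriv_add (hU1.differentiable (by simp) y) (hvc'.differentiable (by simp) y)
  have hw1c : ContDiff ℝ (⊤ : ℕ∞) (deriv w) := (contDiff_infty_iff_deriv.mp hwc).2
  have hw2 : ∀ x ∈ Set.Ioi (0:ℝ), deriv (deriv w) x
      = ((x-k)^2 - lam k) * w x - deriv lam k * u k x := by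
    intro x hx
    have e : deriv w = fun y => deriv (deriv (u k)) y + deriv v y := funext hw1
    rw [e, deriv_fun_add (hU2c.differentiable (by simp) x) (hv1.differentiable (by simp) x),
      hu3 x hx, hveq x hx, hw_def]
    ring
  -- Φ and its derivative
  set P : ℝ → ℝ := fun y => deriv (u k) y * w y - u k y * deriv w y with hP_def
  have hPd : ∀ x ∈ Set.Ioi (0:ℝ), HasDerivAt P (deriv lam k * (u k x)^2) x := by
    intro x hx
    have h1 : HasDerivAt (fun y => deriv (u k) y * w y)
        (deriv (deriv (u k)) x * w x + deriv (u k) x * deriv w x) x :=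
      ((hU1.differentiable (by simp) x).hasDerivAt).mul (hwd x)
    have h2 : HasDerivAt (fun y => u k y * deriv w y)
        (deriv (u k) x * deriv w x + u k x * deriv (deriv w) x) x :=
      (hUd x).mul ((hw1c.differentiable (by simp) x).hasDerivAt)
    have h3 := h1.sub h2
    exact h3.congr_deriv (by rw [hu2 x hx, hw2 x hx]; ring)
  -- FTC
  have hPcont : Continuous P := by
    rw [hP_def]
    exact ((hU1.continuous.mul hwc.continuous).sub (hUc'.continuous.mul hw1c.continuous))
  have key : ∀ b : ℝ, 0 ≤ b →
      ∫ y in (0:ℝ)..b, deriv lam k * (u k y)^2 = P b - P 0 := by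
    intro b hb
    exact intervalIntegral.integral_eq_sub_of_hasDeriv_right_of_le hb
      hPcont.continuousOn
      (fun x hx => ((hPd x hx.1).hasDerivWithinAt))
      ((continuous_const.mul (hUc'.continuous.pow 2)).intervalIntegrable 0 b)
  -- norm integrability and limit
  have hInt : IntegrableOn (fun x => u k x ^ 2) (Set.Ioi (0:ℝ)) := by
    by_contra hcon
    have h := hnorm k
    rw [integral_undef hcon] at h
    exact one_ne_zero h.symm
  have hlim1 : Tendsto (fun b => ∫ x in (0:ℝ)..b, u k x ^ 2) atTop (nhds 1) := by
    have := intervalIntegral_tendsto_integral_Ioi 0 hInt tendsto_id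
    rwa [hnorm k] at this
  have hPlim : Tendsto P atTop (nhds (P 0 + deriv lam k)) := by
    have h2 : Tendsto (fun b => P 0 + deriv lam k * ∫ x in (0:ℝ)..b, u k x ^ 2)
        atTop (nhds (P 0 + deriv lam k * 1)) :=
      tendsto_const_nhds.add (tendsto_const_nhds.mul hlim1)
    rw [mul_one] at h2
    apply h2.congr'
    filter_upwards [eventually_ge_atTop (0:ℝ)] with b hb
    have h3 := key b hb
    rw [intervalIntegral.integral_const_mul] at h3
    linarith
  -- value of P at 0
  have hv00 : v 0 = 0 := by
    rw [hv_def]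
    have e : (fun k' => u k' 0) = fun _ : ℝ => (0:ℝ) := funext fun k' => hbc k'
    simp [e]
  have hP0 : P 0 = (deriv (u k) 0)^2 := by
    rw [hP_def, hw_def]
    simp only [hbc k, hv00, add_zero, zero_mul, sub_zero]
    ring
  -- limit of u * v'
  have hx2 : Tendsto (fun x => u k x * deriv (deriv (u k)) x) atTop (nhds 0) := by
    have t0 : Tendsto (fun x => x * u k x - k * u k x) atTop (nhds 0) := by
      have := hxu0.sub (hu0.const_mul k)
      simpa using this
    have t1 : Tendsto (fun x => (x * u k x - k * u k x) * (x * u k x - k * u k x)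
        - lam k * (u k x * u k x)) atTop (nhds 0) := by
      have := (t0.mul t0).sub ((hu0.mul hu0).const_mul (lam k))
      simpa using this
    apply t1.congr'
    filter_upwards [eventually_gt_atTop (0:ℝ)] with x hx
    rw [hu2 x hx]; ring
  have hPalt : ∀ x, u k x * deriv v x
      = deriv (u k) x * deriv (u k) x + deriv (u k) x * v x
        - u k x * deriv (deriv (u k)) x - P x := by
    intro x
    rw [hP_def]
    simp only
    rw [hw1 x, hw_def]
    ring
  have huv' : Tendsto (fun x => u k x * deriv v x) atTop
      (nhds (-(P 0 + deriv lam k))) := by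
    have A := ((hu'0.mul hu'0).add (hu'0.mul hv0)).sub hx2
    have B := A.sub hPlim
    have C := B.congr (fun x => (hPalt x).symm)
    simpa using C
  -- main claim: P 0 + deriv lam k = 0
  have hL : P 0 + deriv lam k = 0 := by
    by_contra hL
    have habs : Tendsto (fun x => |deriv v x|) atTop atTop := by
      rw [tendsto_atTop]
      intro C
      set M : ℝ := max C 1 with hM
      have hM0 : (0:ℝ) < M := lt_of_lt_of_le one_pos (le_max_right _ _)
      set ε : ℝ := |P 0 + deriv lam k| / (2 * M) with hε_def
      have hε : 0 < ε := div_pos (abs_pos.2 hL) (by positivity)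
      have h1 : ∀ᶠ x in atTop, |u k x| < ε := by
        have := Metric.tendsto_nhds.mp hu0 ε hε
        filter_upwards [this] with x hx
        simpa [Real.dist_eq] using hx
      have h2 : ∀ᶠ x in atTop, |P 0 + deriv lam k| / 2 < |u k x * deriv v x| := by
        have habs2 : Tendsto (fun x => |u k x * deriv v x|) atTop
            (nhds |P 0 + deriv lam k|) := by
          have := huv'.abs
          rwa [abs_neg] at this
        exact habs2.eventually (lt_mem_nhds (half_lt_self (abs_pos.2 hL)))
      filter_upwards [h1, h2] with x hx1 hx2
      by_contra hCx
      push_neg at hCx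
      have hvM : |deriv v x| ≤ M := le_trans hCx.le (le_max_left _ _)
      have hprod : |u k x * deriv v x| ≤ ε * M := by
        rw [abs_mul]
        exact mul_le_mul hx1.le hvM (abs_nonneg _) hε.le
      have heM : ε * M = |P 0 + deriv lam k| / 2 := by
        rw [hε_def]; field_simp
      rw [heM] at hprod
      linarith
    have h1 : ∀ᶠ x in atTop, 1 ≤ |deriv v x| := tendsto_atTop.mp habs 1
    obtain ⟨a, ha⟩ := eventually_atTop.mp h1
    have hvd : Differentiable ℝ v := hvc'.differentiable (by simp)
    have hvdc : Continuous (deriv v) := hvc'.continuous_deriv hone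
    have hsmall : ∀ᶠ x in atTop, |v x| < 1 := by
      have := Metric.tendsto_nhds.mp hv0 1 one_pos
      filter_upwards [this] with x hx
      simpa [Real.dist_eq] using hx
    obtain ⟨b, hb⟩ := eventually_atTop.mp hsmall
    rcases le_or_gt 1 (deriv v a) with hpos | hneg
    · -- positive case : deriv v ≥ 1 on [a, ∞)
      have hsign : ∀ x, a ≤ x → 1 ≤ deriv v x := by
        intro x hx
        by_contra hcx
        push_neg at hcx
        have hxneg : deriv v x ≤ -1 := by
          rcases abs_cases (deriv v x) with ⟨e1, e2⟩ | ⟨e1, e2⟩ <;> [linarith [ha x hx]; linarith [ha x hx]]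
        have hmem : (0:ℝ) ∈ Set.Icc (deriv v x) (deriv v a) := ⟨by linarith, by linarith⟩
        obtain ⟨c, hc, hc0⟩ := intermediate_value_Icc' hx (hvdc.continuousOn) hmem
        have := ha c hc.1
        rw [hc0] at this
        norm_num at this
      have grow := (convex_Ici a).mul_sub_le_image_sub_of_le_deriv
        hvd.continuous.continuousOn hvd.differentiableOn
        (C := 1) (fun x hx => hsign x (le_of_lt (by simpa [interior_Ici] using hx)))
      set y : ℝ := max b (a + |v a| + 2) with hy_def
      have hay : a ≤ y := by
        have : a + |v a| + 2 ≤ y := le_max_right _ _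
        have := abs_nonneg (v a)
        linarith
      have h3 : 1 * (y - a) ≤ v y - v a :=
        grow a Set.self_mem_Ici y hay hay
      have h4 : |v y| < 1 := hb y (le_max_left _ _)
      have h5 : a + |v a| + 2 ≤ y := le_max_right _ _
      have h6 := neg_abs_le (v a)
      have h7 := abs_le.mp (le_of_lt h4)
      linarith [h7.2]
    · -- negative case : deriv v ≤ -1 on [a, ∞)
      have haneg : deriv v a ≤ -1 := by
        rcases abs_cases (deriv v a) with ⟨e1, e2⟩ | ⟨e1, e2⟩ <;> [linarith [ha a le_rfl]; linarith [ha a le_rfl]]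
      have hsign : ∀ x, a ≤ x → deriv v x ≤ -1 := by
        intro x hx
        by_contra hcx
        push_neg at hcx
        have hxpos : 1 ≤ deriv v x := by
          rcases abs_cases (deriv v x) with ⟨e1, e2⟩ | ⟨e1, e2⟩ <;> [linarith [ha x hx]; linarith [ha x hx]]
        have hmem : (0:ℝ) ∈ Set.Icc (deriv v a) (deriv v x) := ⟨by linarith, by linarith⟩
        obtain ⟨c, hc, hc0⟩ := intermediate_value_Icc hx (hvdc.continuousOn) hmem
        have := ha c hc.1
        rw [hc0] at this
        norm_num at this
      have grow := (convex_Ici a).image_sub_le_mul_sub_of_deriv_le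
        hvd.continuous.continuousOn hvd.differentiableOn
        (C := -1) (fun x hx => hsign x (le_of_lt (by simpa [interior_Ici] using hx)))
      set y : ℝ := max b (a + |v a| + 2) with hy_def
      have hay : a ≤ y := by
        have : a + |v a| + 2 ≤ y := le_max_right _ _
        have := abs_nonneg (v a)
        linarith
      have h3 : v y - v a ≤ -1 * (y - a) :=
        grow a Set.self_mem_Ici y hay hay
      have h4 : |v y| < 1 := hb y (le_max_left _ _)
      have h5 : a + |v a| + 2 ≤ y := le_max_right _ _
      have h6 := le_abs_self (v a)
      have h7 := abs_le.mp (le_of_lt h4)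
      linarith [h7.1]
  -- conclude
  rw [hP0] at hL
  linarith
end
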